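/- Fix a prime p and a probability distribution P on (ℤ/pℤ)². Let |Ψ⟩ := Σ_{(x,z)} √(P(x,z)) (W(x,z) ⊗ I)|Φ⟩_{AB} ⊗ |x,z⟩_E ∈ ℂ^p ⊗ ℂ^p ⊗ ℂ^{p²} and ω_{AE} := Tr_B |Ψ⟩⟨Ψ|. Then for every t > 0, H̃_{1+t}^{↑}(A|E|ω_{AE}) ≥ log₂ p − H_{1/(1+t)}(P), where H_{1/(1+t)}(P) := ((1+t)/t) log₂ Σ_{x,z} P(x,z)^{1/(1+t)} is the classical Rényi entropy of order 1/(1+t). -/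

import Mathlib

open scoped Kronecker ComplexOrder
open Matrix

noncomputable section

/-- Real power of a Hermitian matrix via functional calculus (junk value `0` otherwise). -/
def Matrix.hpow {n : Type*} [Fintype n] [DecidableEq n] (A : Matrix n n ℂ) (r : ℝ) :
    Matrix n n ℂ :=
  if hA : A.IsHermitian then
    (hA.eigenvectorUnitary : Matrix n n ℂ) *
      Matrix.diagonal (fun i => ((hA.eigenvalues i ^ r : ℝ) : ℂ)) *
      (hA.eigenvectorUnitary : Matrix n n ℂ)ᴴ
  else 0

/-- Trace norm ‖A‖₁ = Tr √(AᴴA). -/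
def Matrix.traceNorm {n : Type*} [Fintype n] [DecidableEq n] (A : Matrix n n ℂ) : ℝ :=
  ((Aᴴ * A).hpow (1/2)).trace.re

/-- Density matrix predicate. -/
def IsDensity {n : Type*} [Fintype n] (ρ : Matrix n n ℂ) : Prop :=
  ρ.PosSemidef ∧ ρ.trace = 1

/-- Probability distribution on a finite type. -/
def IsProbDist {X : Type*} [Fintype X] (Q : X → ℝ) : Prop :=
  (∀ x, 0 ≤ Q x) ∧ ∑ x, Q x = 1

/-- Tr[(σ^{−t/(2(1+t))} ρ σ^{−t/(2(1+t))})^{1+t}]. -/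
def sandwichTr {n : Type*} [Fintype n] [DecidableEq n] (t : ℝ) (ρ σ : Matrix n n ℂ) : ℝ :=
  (((σ.hpow (-(t / (2 * (1 + t)))) * ρ * σ.hpow (-(t / (2 * (1 + t))))).hpow (1 + t)).trace).re

/-- Ĩ_{1+t}^{↓}(X;E|W×Q), infimum over positive definite density matrices. -/
def ItildeDown {X n : Type*} [Fintype X] [Fintype n] [DecidableEq n]
    (t : ℝ) (W : X → Matrix n n ℂ) (Q : X → ℝ) : ℝ :=
  ⨅ σ : {σ : Matrix n n ℂ // σ.PosDef ∧ σ.trace = 1},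
    (1 / t) * Real.logb 2 (∑ x, Q x * sandwichTr t (W x) σ.1)

/-- The uniform classical state on a finite type. -/
def uniformState (T : Type*) [Fintype T] [DecidableEq T] : Matrix T T ℂ :=
  (Fintype.card T : ℂ)⁻¹ • 1

/-- The generalized Pauli `X` (shift) matrix on `ℂ^p`. -/
def Xmat (p : ℕ) [NeZero p] : Matrix (ZMod p) (ZMod p) ℂ :=
  Matrix.of fun j k => if j = k + 1 then 1 else 0

/-- The root of unity `ω = exp(2πi/p)`. -/
def omeg (p : ℕ) : ℂ := Complex.exp (2 * Real.pi * Complex.I / p)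

/-- The generalized Pauli `Z` (phase) matrix on `ℂ^p`. -/
def Zmat (p : ℕ) [NeZero p] : Matrix (ZMod p) (ZMod p) ℂ :=
  Matrix.diagonal fun j => omeg p ^ j.val

/-- The Weyl operator `W(x,z) = X^x Z^z`. -/
def WeylOp (p : ℕ) [NeZero p] (x z : ZMod p) : Matrix (ZMod p) (ZMod p) ℂ :=
  Xmat p ^ x.val * Zmat p ^ z.val

/-- The maximally entangled vector `|Φ⟩ = (1/√p) Σ_j |j⟩⊗|j⟩`. -/
def BellVec (p : ℕ) [NeZero p] : ZMod p × ZMod p → ℂ :=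
  fun jk => if jk.1 = jk.2 then ((Real.sqrt p : ℝ) : ℂ)⁻¹ else 0

/-- The projector `|Φ⟩⟨Φ|` onto the maximally entangled state. -/
def BellProj (p : ℕ) [NeZero p] : Matrix (ZMod p × ZMod p) (ZMod p × ZMod p) ℂ :=
  Matrix.vecMulVec (BellVec p) (star (BellVec p))

/-- The Bell-diagonal state `ρ[Q]`. -/
def bellDiag (p : ℕ) [NeZero p] (Q : ZMod p × ZMod p → ℝ) :
    Matrix (ZMod p × ZMod p) (ZMod p × ZMod p) ℂ :=
  ∑ xz : ZMod p × ZMod p, (Q xz : ℂ) •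
    ((WeylOp p xz.1 xz.2 ⊗ₖ (1 : Matrix (ZMod p) (ZMod p) ℂ)) * BellProj p *
      (WeylOp p xz.1 xz.2 ⊗ₖ (1 : Matrix (ZMod p) (ZMod p) ℂ))ᴴ)

/-- Partial trace over the first tensor factor. -/
def ptraceFst {a b : Type*} [Fintype a] (ρ : Matrix (a × b) (a × b) ℂ) : Matrix b b ℂ :=
  Matrix.of fun i j => ∑ k, ρ (k, i) (k, j)

/-- Partial trace over the second tensor factor. -/
def ptraceSnd {a b : Type*} [Fintype b] (ρ : Matrix (a × b) (a × b) ℂ) : Matrix a a ℂ :=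
  Matrix.of fun i j => ∑ k, ρ (i, k) (j, k)

/-- Petz Rényi divergence `D_{1−t}(ρ‖σ) = (−1/t) log₂ Tr[ρ^{1−t} σ^{t}]`. -/
def DPetzOneSub {n : Type*} [Fintype n] [DecidableEq n] (t : ℝ) (ρ σ : Matrix n n ℂ) : ℝ :=
  (-(1 / t)) * Real.logb 2 ((ρ.hpow (1 - t) * σ.hpow t).trace.re)

/-- Petz Rényi mutual information `I_{1−t}^{↑}(X;B|W×Q) = D_{1−t}(ρ_{XB}‖ρ_X ⊗ ρ_B)`. -/
def IupPetzOneSub {X n : Type*} [Fintype X] [DecidableEq X] [Fintype n] [DecidableEq n]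
    (t : ℝ) (W : X → Matrix n n ℂ) (Q : X → ℝ) : ℝ :=
  DPetzOneSub t
    (∑ x, (Q x : ℂ) • (Matrix.single x x (1 : ℂ) ⊗ₖ W x))
    ((∑ x, (Q x : ℂ) • Matrix.single x x (1 : ℂ)) ⊗ₖ (∑ x, (Q x : ℂ) • W x))

/-- Conditional Petz Rényi entropy `H_{1−t}^{↓}(A|B|ρ_{AB}) = −D_{1−t}(ρ_{AB}‖I_A ⊗ ρ_B)`. -/
def HdownPetzOneSub {a b : Type*} [Fintype a] [DecidableEq a] [Fintype b] [DecidableEq b]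
    (t : ℝ) (ρAB : Matrix (a × b) (a × b) ℂ) : ℝ :=
  -(DPetzOneSub t ρAB ((1 : Matrix a a ℂ) ⊗ₖ ptraceFst ρAB))

/-- Sandwiched Rényi divergence `D̃_{1+t}(ρ‖σ)`. -/
def Dtilde {n : Type*} [Fintype n] [DecidableEq n] (t : ℝ) (ρ σ : Matrix n n ℂ) : ℝ :=
  (1 / t) * Real.logb 2 (sandwichTr t ρ σ)

/-- Conditional sandwiched Rényi entropy
`H̃_{1+t}^{↑}(A|E|ρ_{AE}) = − inf_{σ_E > 0} D̃_{1+t}(ρ_{AE}‖I_A ⊗ σ_E)`. -/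
def HtildeUp {a e : Type*} [Fintype a] [DecidableEq a] [Fintype e] [DecidableEq e]
    (t : ℝ) (ρAE : Matrix (a × e) (a × e) ℂ) : ℝ :=
  -(⨅ σ : {σ : Matrix e e ℂ // σ.PosDef ∧ σ.trace = 1},
      Dtilde t ρAE ((1 : Matrix a a ℂ) ⊗ₖ σ.1))

/-- The purification `|Ψ⟩ = Σ_{x,z} √P(x,z) (W(x,z)⊗I)|Φ⟩ ⊗ |x,z⟩` as a vector on
`ℂ^p ⊗ ℂ^p ⊗ ℂ^{p²}`. -/
def PsiVec (p : ℕ) [NeZero p] (P : ZMod p × ZMod p → ℝ) :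
    ZMod p × ZMod p × (ZMod p × ZMod p) → ℂ :=
  fun abe => ((Real.sqrt (P abe.2.2) : ℝ) : ℂ) *
    ((WeylOp p abe.2.2.1 abe.2.2.2 ⊗ₖ (1 : Matrix (ZMod p) (ZMod p) ℂ)).mulVec
      (BellVec p)) (abe.1, abe.2.1)

/-!
Tracing out `B` gives `ω_AE = ∑_b |ψ_b⟩⟨ψ_b|` with `ψ_b = (⟨b|_B ⊗ I)|Ψ⟩`. Because the Weyl
operators are unitary, the `ψ_b` are pairwise orthogonal with equal norms. So for a diagonal
`σ_E = diag q` the sandwiched operator `(I ⊗ σ_E)^{-s} ω_AE (I ⊗ σ_E)^{-s}`, `s = t/(2(1+t))`, is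
`c` times a rank-`p` projection, `c = p⁻¹ ∑_e q_e^{-t/(1+t)} P_e`, whence
`D̃_{1+t}(ω_AE ‖ I ⊗ σ_E) = ((1+t)/t) log₂ ∑_e q_e^{-t/(1+t)} P_e - log₂ p`.
For `q = P` this is exactly the bound; since `σ_E` must be positive definite, `q` is taken to be
`P` mixed with a little of the uniform distribution. The infimum is a real `⨅`, so it is junk
unless the family is bounded below: `I ⊗ σ_E ≤ 1` makes the sandwiched trace at least
`dim^{-(1+t)}`.
-/

namespace Matrix

variable {n : Type*} [Fintype n] [DecidableEq n]

theorem IsHermitian.hpow_eq_cfc {A : Matrix n n ℂ} (hA : A.IsHermitian) (r : ℝ) :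
    A.hpow r = cfc (· ^ r : ℝ → ℝ) A := by
  rw [hA.cfc_eq, IsHermitian.cfc, Unitary.conjStarAlgAut_apply, hpow, dif_pos hA]
  rfl

theorem IsHermitian.re_trace_hpow {A : Matrix n n ℂ} (hA : A.IsHermitian) (r : ℝ) :
    (A.hpow r).trace.re = ∑ i, hA.eigenvalues i ^ r := by
  rw [hpow, dif_pos hA, trace_mul_cycle, ← star_eq_conjTranspose, Unitary.coe_star_mul_self,
    one_mul, trace_diagonal, Complex.re_sum]
  simp

theorem hpow_diagonal (d : n → ℝ) (r : ℝ) :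
    (diagonal fun i => (d i : ℂ)).hpow r = diagonal fun i => ((d i ^ r : ℝ) : ℂ) := by
  have hA : (diagonal fun i => (d i : ℂ)).IsHermitian := by
    simp [IsHermitian, diagonal_conjTranspose]
  set U : Matrix n n ℂ := (hA.eigenvectorUnitary : Matrix n n ℂ)
  have hUU : U * star U = 1 := Unitary.coe_mul_star_self _
  have hAU : (diagonal fun i => (d i : ℂ)) * U = U * diagonal fun j => (hA.eigenvalues j : ℂ) := by
    conv_lhs => rw [hA.spectral_theorem, Unitary.conjStarAlgAut_apply]
    rw [mul_assoc, Unitary.coe_star_mul_self, mul_one]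
    rfl
  -- `U i j ≠ 0` forces `d i = eigenvalues j`, so `U` intertwines any function of both spectra
  have hpowU : (diagonal fun i => ((d i ^ r : ℝ) : ℂ)) * U
      = U * diagonal fun j => ((hA.eigenvalues j ^ r : ℝ) : ℂ) := by
    ext i j
    have hij := congr_fun (congr_fun hAU i) j
    simp only [diagonal_mul, mul_diagonal] at hij ⊢
    rcases eq_or_ne (U i j) 0 with h0 | h0
    · simp [h0]
    · rw [mul_comm] at hij
      have : d i = hA.eigenvalues j := by exact_mod_cast mul_left_cancel₀ h0 hij
      rw [this, mul_comm]
  rw [hpow, dif_pos hA, ← hpowU, mul_assoc, ← star_eq_conjTranspose, hUU, mul_one]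

theorem IsHermitian.hpow_eq_smul_of_mul_self {A : Matrix n n ℂ} (hA : A.IsHermitian) {c : ℝ}
    (hc : 0 < c) (hAA : A * A = c • A) {r : ℝ} (hr : 0 < r) :
    A.hpow r = c ^ (r - 1) • A := by
  have hspec : (spectrum ℝ A).EqOn (fun x => x * x) (fun x => c * x) := by
    refine eqOn_of_cfc_eq_cfc ?_
    rw [cfc_mul _ _ A, cfc_const_mul_id c A, cfc_id' ℝ A, hAA]
  rw [hA.hpow_eq_cfc, ← cfc_const_mul_id (c ^ (r - 1)) A]
  refine cfc_congr fun x hx => ?_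
  rcases mul_eq_zero.mp (show x * (x - c) = 0 by linear_combination hspec hx) with h | h
  · simp [h, Real.zero_rpow hr.ne']
  · rw [show x = c by linarith, ← Real.rpow_add_one hc.ne', sub_add_cancel]

open scoped MatrixOrder

theorem PosSemidef.re_trace_mul_nonneg {A B : Matrix n n ℂ} (hA : A.PosSemidef)
    (hB : B.PosSemidef) : 0 ≤ (A * B).trace.re := by
  have hS : (CFC.sqrt A)ᴴ = CFC.sqrt A := (CFC.sqrt_nonneg A).posSemidef.isHermitian
  have hSBS := hB.mul_mul_conjTranspose_same (CFC.sqrt A)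
  rw [hS] at hSBS
  rw [← CFC.sqrt_mul_sqrt_self A hA.nonneg, mul_assoc, trace_mul_comm]
  exact (RCLike.nonneg_iff.mp hSBS.trace_nonneg).1

theorem one_le_hpow_mul_hpow {τ : Matrix n n ℂ} (hτ : τ.PosDef) (hτ1 : τ ≤ 1) {r : ℝ}
    (hr : r ≤ 0) : 1 ≤ τ.hpow r * τ.hpow r := by
  have hfin := τ.finite_real_spectrum
  rw [hτ.isHermitian.hpow_eq_cfc, ← cfc_mul _ _ τ (hfin.continuousOn _) (hfin.continuousOn _),
    one_le_cfc_iff _ τ (hfin.continuousOn _)]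
  intro x hx
  have hx0 : 0 < x := by
    rw [hτ.isHermitian.spectrum_real_eq_range_eigenvalues] at hx
    obtain ⟨i, rfl⟩ := hx
    exact hτ.eigenvalues_pos i
  have hx1 : x ≤ 1 := (CFC.le_one_iff τ).mp hτ1 x hx
  have h1 := Real.one_le_rpow_of_pos_of_le_one_of_nonpos hx0 hx1 hr
  exact one_le_mul_of_one_le_of_one_le h1 h1

theorem one_le_re_trace_hpow_mul_mul_hpow {ρ τ : Matrix n n ℂ} (hρ : ρ.PosSemidef)
    (hρ1 : ρ.trace = 1) (hτ : τ.PosDef) (hτ1 : τ ≤ 1) {r : ℝ} (hr : r ≤ 0) :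
    1 ≤ (τ.hpow r * ρ * τ.hpow r).trace.re := by
  have h := PosSemidef.re_trace_mul_nonneg (le_iff.mp (one_le_hpow_mul_hpow hτ hτ1 hr)) hρ
  rw [sub_mul, one_mul, trace_sub, Complex.sub_re, hρ1, Complex.one_re] at h
  rw [trace_mul_cycle]
  linarith

theorem PosSemidef.inv_card_rpow_le_re_trace_hpow {M : Matrix n n ℂ} (hM : M.PosSemidef)
    (hM1 : 1 ≤ M.trace.re) {r : ℝ} (hr : 0 ≤ r) :
    (Fintype.card n : ℝ)⁻¹ ^ r ≤ (M.hpow r).trace.re := by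
  have htr : M.trace.re = ∑ i, hM.isHermitian.eigenvalues i := by
    simp [hM.isHermitian.trace_eq_sum_eigenvalues, Complex.re_sum]
  have hne : (Finset.univ : Finset n).Nonempty :=
    Finset.nonempty_of_sum_ne_zero (f := hM.isHermitian.eigenvalues) (by linarith)
  have hcard : ∑ _i : n, (Fintype.card n : ℝ)⁻¹ = 1 := by
    rw [Finset.sum_const, Finset.card_univ, nsmul_eq_mul,
      mul_inv_cancel₀ (by exact_mod_cast (Finset.card_pos.mpr hne).ne')]
  obtain ⟨i, -, hi⟩ := Finset.exists_le_of_sum_le hne (hcard.trans_le (htr ▸ hM1))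
  rw [hM.isHermitian.re_trace_hpow]
  calc (Fintype.card n : ℝ)⁻¹ ^ r ≤ hM.isHermitian.eigenvalues i ^ r :=
        Real.rpow_le_rpow (by positivity) hi hr
    _ ≤ ∑ j, hM.isHermitian.eigenvalues j ^ r :=
        Finset.single_le_sum (fun j _ => Real.rpow_nonneg (hM.eigenvalues_nonneg j) r)
          (Finset.mem_univ i)

theorem inv_card_rpow_le_sandwichTr {ρ τ : Matrix n n ℂ} (hρ : ρ.PosSemidef) (hρ1 : ρ.trace = 1)
    (hτ : τ.PosDef) (hτ1 : τ ≤ 1) {t : ℝ} (ht : 0 < t) :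
    (Fintype.card n : ℝ)⁻¹ ^ (1 + t) ≤ sandwichTr t ρ τ := by
  have hX : (τ.hpow (-(t / (2 * (1 + t))))).IsHermitian := by
    rw [hτ.isHermitian.hpow_eq_cfc]
    exact cfc_predicate _ τ
  have hM := hρ.mul_mul_conjTranspose_same (τ.hpow (-(t / (2 * (1 + t)))))
  rw [hX] at hM
  refine hM.inv_card_rpow_le_re_trace_hpow ?_ (by linarith)
  exact one_le_re_trace_hpow_mul_mul_hpow hρ hρ1 hτ hτ1 (neg_nonpos.mpr (by positivity))

theorem PosSemidef.le_one_of_trace_eq_one {σ : Matrix n n ℂ} (hσ : σ.PosSemidef)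
    (hσ1 : σ.trace = 1) : σ ≤ 1 := by
  rw [CFC.le_one_iff (R := ℝ) σ hσ.isHermitian]
  rintro x hx
  rw [hσ.isHermitian.spectrum_real_eq_range_eigenvalues] at hx
  obtain ⟨i, rfl⟩ := hx
  have hsum : ∑ j, hσ.isHermitian.eigenvalues j = 1 := by
    simpa [Complex.ext_iff, hσ.isHermitian.trace_eq_sum_eigenvalues] using hσ1
  exact hsum ▸ Finset.single_le_sum (fun j _ => hσ.eigenvalues_nonneg j) (Finset.mem_univ i)

theorem one_kronecker_le_one {m : Type*} [Fintype m] [DecidableEq m] {σ : Matrix n n ℂ}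
    (hσ : σ ≤ 1) : (1 : Matrix m m ℂ) ⊗ₖ σ ≤ 1 := by
  have h : (1 : Matrix m m ℂ) ⊗ₖ (1 - σ) = 1 - 1 ⊗ₖ σ := by
    rw [eq_sub_iff_add_eq, ← kronecker_add, sub_add_cancel, one_kronecker_one]
  exact le_iff.mpr (h ▸ PosSemidef.one.kronecker (le_iff.mp hσ))

theorem sum_vecMulVec_mul_self {R β ι : Type*} [CommRing R] [StarRing R] [Fintype β]
    [DecidableEq β] [Fintype ι] (u : β → ι → R) {c : R}
    (hu : ∀ b b', star (u b) ⬝ᵥ u b' = if b = b' then c else 0) :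
    (∑ b, vecMulVec (u b) (star (u b))) * (∑ b, vecMulVec (u b) (star (u b)))
      = c • ∑ b, vecMulVec (u b) (star (u b)) := by
  rw [Finset.sum_mul_sum]
  simp_rw [vecMulVec_mul_vecMulVec, vecMulVec_smul, hu, ite_smul, zero_smul]
  simp [Finset.smul_sum]

theorem diagonal_mul_vecMulVec_mul_diagonal {ι : Type*} [Fintype ι] [DecidableEq ι]
    (g : ι → ℝ) (u : ι → ℂ) :
    diagonal (fun i => (g i : ℂ)) * vecMulVec u (star u) * diagonal (fun i => (g i : ℂ))
      = vecMulVec (fun i => (g i : ℂ) * u i) (star fun i => (g i : ℂ) * u i) := by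
  ext i j
  simp [vecMulVec_apply, mul_diagonal, diagonal_mul]
  ring

end Matrix

theorem bddBelow_range_Dtilde_one_kronecker {a e : Type*} [Fintype a] [DecidableEq a]
    [Fintype e] [DecidableEq e] {ρ : Matrix (a × e) (a × e) ℂ} (hρ : ρ.PosSemidef)
    (hρ1 : ρ.trace = 1) {t : ℝ} (ht : 0 < t) :
    BddBelow (Set.range fun σ : {σ : Matrix e e ℂ // σ.PosDef ∧ σ.trace = 1} =>
      Dtilde t ρ ((1 : Matrix a a ℂ) ⊗ₖ σ.1)) := by
  have : Nonempty (a × e) := by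
    by_contra h
    rw [not_nonempty_iff] at h
    simp [trace] at hρ1
  refine ⟨(1 / t) * Real.logb 2 ((Fintype.card (a × e) : ℝ)⁻¹ ^ (1 + t)), ?_⟩
  rintro _ ⟨⟨σ, hσ, hσ1⟩, rfl⟩
  have hbound := inv_card_rpow_le_sandwichTr hρ hρ1 (PosDef.one.kronecker hσ)
    (one_kronecker_le_one (hσ.posSemidef.le_one_of_trace_eq_one hσ1)) ht
  exact mul_le_mul_of_nonneg_left (Real.logb_le_logb_of_le one_lt_two (by positivity) hbound)
    (by positivity)

theorem IsProbDist.exists_pos {X : Type*} [Fintype X] {P : X → ℝ} (hP : IsProbDist P) :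
    ∃ x, 0 < P x := by
  obtain ⟨x, -, hx⟩ := Finset.exists_lt_of_sum_lt (s := Finset.univ) (f := 0) (g := P)
    (by simp [hP.2])
  exact ⟨x, hx⟩

theorem IsProbDist.sum_mul_pos {X : Type*} [Fintype X] {P : X → ℝ} (hP : IsProbDist P)
    {w : X → ℝ} (hw : ∀ x, 0 < w x) : 0 < ∑ x, w x * P x := by
  obtain ⟨x₀, hx₀⟩ := hP.exists_pos
  exact Finset.sum_pos' (fun x _ => mul_nonneg (hw x).le (hP.1 x))
    ⟨x₀, Finset.mem_univ _, mul_pos (hw x₀) hx₀⟩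

theorem Real.rpow_neg_mul_le_of_mul_le {κ x y a : ℝ} (hκ : 0 < κ) (hx : 0 ≤ x)
    (hκxy : κ * x ≤ y) (ha0 : 0 ≤ a) (ha1 : a < 1) :
    y ^ (-a) * x ≤ κ ^ (-a) * x ^ (1 - a) := by
  rcases hx.eq_or_lt with rfl | hx
  · simp [Real.zero_rpow (by linarith : 1 - a ≠ 0)]
  calc y ^ (-a) * x ≤ (κ * x) ^ (-a) * x :=
        mul_le_mul_of_nonneg_right
          (Real.rpow_le_rpow_of_nonpos (by positivity) hκxy (by linarith)) hx.le
    _ = κ ^ (-a) * x ^ (1 - a) := by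
        rw [Real.mul_rpow hκ.le hx.le, sub_eq_neg_add, Real.rpow_add hx, Real.rpow_one, mul_assoc]

theorem IsProbDist.exists_pos_logb_sum_rpow_neg_mul_le {X : Type*} [Fintype X] {P : X → ℝ}
    (hP : IsProbDist P) {a : ℝ} (ha0 : 0 ≤ a) (ha1 : a < 1) {δ : ℝ} (hδ : 0 < δ) :
    ∃ q : X → ℝ, (∀ x, 0 < q x) ∧ ∑ x, q x = 1 ∧
      Real.logb 2 (∑ x, q x ^ (-a) * P x) ≤ Real.logb 2 (∑ x, P x ^ (1 - a)) + δ := by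
  obtain ⟨x₀, hx₀⟩ := hP.exists_pos
  have hcard : (0 : ℝ) < Fintype.card X := by
    exact_mod_cast Fintype.card_pos_iff.mpr ⟨x₀⟩
  set κ : ℝ := 2 ^ (-δ)
  have hκ0 : 0 < κ := by positivity
  have hκ1 : κ < 1 := Real.rpow_lt_one_of_one_lt_of_neg one_lt_two (by linarith)
  set q : X → ℝ := fun x => κ * P x + (1 - κ) / Fintype.card X
  have hκ1' : 0 < 1 - κ := sub_pos.mpr hκ1
  have hκq : ∀ x, κ * P x ≤ q x := fun x => le_add_of_nonneg_right (by positivity)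
  have hq : ∀ x, 0 < q x := fun x =>
    add_pos_of_nonneg_of_pos (mul_nonneg hκ0.le (hP.1 x)) (by positivity)
  refine ⟨q, hq, ?_, ?_⟩
  · rw [Finset.sum_add_distrib, ← Finset.mul_sum, hP.2, Finset.sum_const, Finset.card_univ,
      nsmul_eq_mul]
    field_simp
    ring
  have hS : 0 < ∑ x, P x ^ (1 - a) :=
    Finset.sum_pos' (fun x _ => Real.rpow_nonneg (hP.1 x) _)
      ⟨x₀, Finset.mem_univ _, Real.rpow_pos_of_pos hx₀ _⟩
  have hle : ∑ x, q x ^ (-a) * P x ≤ κ ^ (-a) * ∑ x, P x ^ (1 - a) := by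
    rw [Finset.mul_sum]
    exact Finset.sum_le_sum fun x _ =>
      Real.rpow_neg_mul_le_of_mul_le hκ0 (hP.1 x) (hκq x) ha0 ha1
  calc Real.logb 2 (∑ x, q x ^ (-a) * P x)
      ≤ Real.logb 2 (κ ^ (-a) * ∑ x, P x ^ (1 - a)) :=
        Real.logb_le_logb_of_le one_lt_two
          (hP.sum_mul_pos fun x => Real.rpow_pos_of_pos (hq x) _) hle
    _ = a * δ + Real.logb 2 (∑ x, P x ^ (1 - a)) := by
        rw [Real.logb_mul (by positivity) hS.ne', ← Real.rpow_mul zero_le_two,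
          Real.logb_rpow zero_lt_two one_lt_two.ne']
        ring
    _ ≤ Real.logb 2 (∑ x, P x ^ (1 - a)) + δ := by
        linarith [mul_le_of_le_one_left hδ.le ha1.le]

theorem Xmat_mem_unitaryGroup (p : ℕ) [NeZero p] : Xmat p ∈ Matrix.unitaryGroup (ZMod p) ℂ := by
  rw [Matrix.mem_unitaryGroup_iff]
  ext j k
  simp [Xmat, Matrix.mul_apply, Matrix.one_apply, ← sub_eq_iff_eq_add]

theorem norm_omeg (p : ℕ) : ‖omeg p‖ = 1 := by
  simp [omeg, Complex.norm_exp]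

theorem Zmat_mem_unitaryGroup (p : ℕ) [NeZero p] : Zmat p ∈ Matrix.unitaryGroup (ZMod p) ℂ := by
  rw [Matrix.mem_unitaryGroup_iff', Zmat, Matrix.star_eq_conjTranspose,
    Matrix.diagonal_conjTranspose, Matrix.diagonal_mul_diagonal, ← Matrix.diagonal_one]
  congr 1
  ext j
  simp [← mul_pow, Complex.conj_mul', norm_omeg]

theorem WeylOp_mem_unitaryGroup (p : ℕ) [NeZero p] (x z : ZMod p) :
    WeylOp p x z ∈ Matrix.unitaryGroup (ZMod p) ℂ :=
  mul_mem (pow_mem (Xmat_mem_unitaryGroup p) _) (pow_mem (Zmat_mem_unitaryGroup p) _)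

theorem sum_star_WeylOp_mul_WeylOp (p : ℕ) [NeZero p] (x z b b' : ZMod p) :
    ∑ a, star (WeylOp p x z a b) * WeylOp p x z a b' = if b = b' then 1 else 0 := by
  simpa [Matrix.mul_apply, Matrix.one_apply] using
    congr_fun (congr_fun (Matrix.mem_unitaryGroup_iff'.mp (WeylOp_mem_unitaryGroup p x z)) b) b'

theorem PsiVec_apply (p : ℕ) [NeZero p] (P : ZMod p × ZMod p → ℝ) (a b : ZMod p)
    (e : ZMod p × ZMod p) :
    PsiVec p P (a, b, e) = √(P e) * (√p : ℂ)⁻¹ * WeylOp p e.1 e.2 a b := by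
  simp [PsiVec, BellVec, Matrix.mulVec, dotProduct, Fintype.sum_prod_type, Matrix.one_apply]
  ring

def psiSlice (p : ℕ) [NeZero p] (P : ZMod p × ZMod p → ℝ) (b : ZMod p) :
    ZMod p × (ZMod p × ZMod p) → ℂ :=
  fun x => PsiVec p P (x.1, b, x.2)

def omegaAE (p : ℕ) [NeZero p] (P : ZMod p × ZMod p → ℝ) :
    Matrix (ZMod p × (ZMod p × ZMod p)) (ZMod p × (ZMod p × ZMod p)) ℂ :=
  ∑ b, Matrix.vecMulVec (psiSlice p P b) (star (psiSlice p P b))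

theorem dotProduct_weighted_psiSlice (p : ℕ) [NeZero p] {P : ZMod p × ZMod p → ℝ}
    (hP0 : ∀ e, 0 ≤ P e) (g : ZMod p × ZMod p → ℝ) (b b' : ZMod p) :
    star (fun x => (g x.2 : ℂ) * psiSlice p P b x) ⬝ᵥ (fun x => (g x.2 : ℂ) * psiSlice p P b' x)
      = if b = b' then (((p : ℝ)⁻¹ * ∑ e, g e ^ 2 * P e : ℝ) : ℂ) else 0 := by
  have hterm : ∀ a e,
      star ((g e : ℂ) * psiSlice p P b (a, e)) * ((g e : ℂ) * psiSlice p P b' (a, e))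
        = ((p : ℝ)⁻¹ * (g e ^ 2 * P e) : ℝ) *
          (star (WeylOp p e.1 e.2 a b) * WeylOp p e.1 e.2 a b') := by
    intro a e
    have hP : (√(P e) : ℂ) * √(P e) = P e := by exact_mod_cast Real.mul_self_sqrt (hP0 e)
    have hp : (√p : ℂ)⁻¹ * (√p : ℂ)⁻¹ = (p : ℂ)⁻¹ := by
      have : (√p : ℂ) * √p = p := by exact_mod_cast Real.mul_self_sqrt (Nat.cast_nonneg p)
      rw [← mul_inv, this]
    simp only [psiSlice, PsiVec_apply, star_mul', Complex.star_def, Complex.conj_ofReal, map_inv₀]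
    push_cast
    linear_combination (g e : ℂ) ^ 2 * starRingEnd ℂ (WeylOp p e.1 e.2 a b) *
      WeylOp p e.1 e.2 a b' * ((√p : ℂ)⁻¹ * (√p : ℂ)⁻¹ * hP + P e * hp)
  simp only [dotProduct, Pi.star_apply]
  rw [Fintype.sum_prod_type]
  simp only [hterm]
  rw [Finset.sum_comm]
  simp_rw [← Finset.mul_sum, sum_star_WeylOp_mul_WeylOp]
  split_ifs
  · simp [Finset.mul_sum]
  · simp

theorem of_sum_vecMulVec_PsiVec_eq_omegaAE (p : ℕ) [NeZero p] (P : ZMod p × ZMod p → ℝ) :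
    (Matrix.of fun (ae ae' : ZMod p × (ZMod p × ZMod p)) => ∑ b : ZMod p,
      Matrix.vecMulVec (PsiVec p P) (star (PsiVec p P)) (ae.1, b, ae.2) (ae'.1, b, ae'.2))
      = omegaAE p P := by
  ext x y
  simp [omegaAE, psiSlice, Matrix.sum_apply, Matrix.vecMulVec_apply]

theorem omegaAE_posSemidef (p : ℕ) [NeZero p] (P : ZMod p × ZMod p → ℝ) :
    (omegaAE p P).PosSemidef :=
  Matrix.posSemidef_sum _ fun _ _ => Matrix.posSemidef_vecMulVec_self_star _

theorem trace_omegaAE (p : ℕ) [NeZero p] {P : ZMod p × ZMod p → ℝ} (hP : IsProbDist P) :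
    (omegaAE p P).trace = 1 := by
  have h := dotProduct_weighted_psiSlice p hP.1 (fun _ => 1)
  simp only [Complex.ofReal_one, one_mul, one_pow] at h
  simp only [omegaAE, Matrix.trace_sum, Matrix.trace_vecMulVec, dotProduct_comm _ (star _),
    fun b => h b b, if_true, hP.2, Finset.sum_const, Finset.card_univ, ZMod.card]
  rw [nsmul_eq_mul, mul_one, Complex.ofReal_inv, Complex.ofReal_natCast,
    mul_inv_cancel₀ (NeZero.ne _)]

theorem diagonal_mul_omegaAE_mul_diagonal (p : ℕ) [NeZero p] (P : ZMod p × ZMod p → ℝ)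
    (g : ZMod p × ZMod p → ℝ) :
    Matrix.diagonal (fun x : ZMod p × (ZMod p × ZMod p) => (g x.2 : ℂ)) * omegaAE p P *
        Matrix.diagonal (fun x => (g x.2 : ℂ))
      = ∑ b, Matrix.vecMulVec (fun x => (g x.2 : ℂ) * psiSlice p P b x)
          (star fun x => (g x.2 : ℂ) * psiSlice p P b x) := by
  simp only [omegaAE, Finset.mul_sum, Finset.sum_mul,
    Matrix.diagonal_mul_vecMulVec_mul_diagonal (fun x : ZMod p × (ZMod p × ZMod p) => g x.2)]

theorem sandwichTr_omegaAE_one_kronecker_diagonal (p : ℕ) [NeZero p]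
    {P : ZMod p × ZMod p → ℝ} (hP : IsProbDist P) {t : ℝ} (ht : 0 < t)
    {q : ZMod p × ZMod p → ℝ} (hq : ∀ e, 0 < q e) :
    sandwichTr t (omegaAE p P)
        ((1 : Matrix (ZMod p) (ZMod p) ℂ) ⊗ₖ Matrix.diagonal fun e => (q e : ℂ))
      = p * ((p : ℝ)⁻¹ * ∑ e, q e ^ (-(t / (1 + t))) * P e) ^ (1 + t) := by
  set g : ZMod p × ZMod p → ℝ := fun e => q e ^ (-(t / (2 * (1 + t))))
  set u : ZMod p → ZMod p × (ZMod p × ZMod p) → ℂ := fun b x => (g x.2 : ℂ) * psiSlice p P b x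
  set c : ℝ := (p : ℝ)⁻¹ * ∑ e, q e ^ (-(t / (1 + t))) * P e
  have hc : 0 < c := mul_pos (inv_pos.mpr (by exact_mod_cast Nat.pos_of_neZero p))
    (hP.sum_mul_pos fun e => Real.rpow_pos_of_pos (hq e) _)
  have hg : ∀ e, g e ^ 2 * P e = q e ^ (-(t / (1 + t))) * P e := by
    intro e
    rw [← Real.rpow_natCast, ← Real.rpow_mul (hq e).le]
    congr 2
    field_simp
    ring
  have hu : ∀ b b', star (u b) ⬝ᵥ u b' = if b = b' then (c : ℂ) else 0 := by
    simpa only [hg] using dotProduct_weighted_psiSlice p hP.1 g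
  have hX : ((1 : Matrix (ZMod p) (ZMod p) ℂ) ⊗ₖ Matrix.diagonal fun e => (q e : ℂ)).hpow
      (-(t / (2 * (1 + t)))) = Matrix.diagonal fun x => (g x.2 : ℂ) := by
    rw [← Matrix.diagonal_one, Matrix.diagonal_kronecker_diagonal]
    simpa using Matrix.hpow_diagonal (fun x : ZMod p × (ZMod p × ZMod p) => q x.2) _
  have hM : (∑ b, Matrix.vecMulVec (u b) (star (u b))).IsHermitian :=
    (Matrix.posSemidef_sum _ fun _ _ => Matrix.posSemidef_vecMulVec_self_star _).isHermitian
  have hMM := Matrix.sum_vecMulVec_mul_self u hu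
  rw [Complex.coe_smul] at hMM
  rw [sandwichTr, hX, diagonal_mul_omegaAE_mul_diagonal,
    hM.hpow_eq_smul_of_mul_self hc hMM (by linarith), add_sub_cancel_left, Matrix.trace_smul,
    Matrix.trace_sum]
  simp only [Matrix.trace_vecMulVec, dotProduct_comm _ (star _), hu, if_true, Finset.sum_const,
    Finset.card_univ, ZMod.card, nsmul_eq_mul, Complex.smul_re]
  rw [← Complex.ofReal_natCast, ← Complex.ofReal_mul, Complex.ofReal_re, smul_eq_mul,
    Real.rpow_add hc, Real.rpow_one]
  ring

theorem Dtilde_omegaAE_one_kronecker_diagonal (p : ℕ) [NeZero p]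
    {P : ZMod p × ZMod p → ℝ} (hP : IsProbDist P) {t : ℝ} (ht : 0 < t)
    {q : ZMod p × ZMod p → ℝ} (hq : ∀ e, 0 < q e) :
    Dtilde t (omegaAE p P)
        ((1 : Matrix (ZMod p) (ZMod p) ℂ) ⊗ₖ Matrix.diagonal fun e => (q e : ℂ))
      = (1 + t) / t * Real.logb 2 (∑ e, q e ^ (-(t / (1 + t))) * P e) - Real.logb 2 p := by
  have hp : (0 : ℝ) < p := by exact_mod_cast Nat.pos_of_neZero p
  have hN := hP.sum_mul_pos fun e => Real.rpow_pos_of_pos (hq e) (-(t / (1 + t)))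
  rw [Dtilde, sandwichTr_omegaAE_one_kronecker_diagonal p hP ht hq,
    Real.logb_mul hp.ne' (by positivity), Real.logb_rpow_eq_mul_logb_of_pos (by positivity),
    Real.logb_mul (by positivity) hN.ne', Real.logb_inv]
  field_simp
  ring

/-- Lower bound on the conditional sandwiched Rényi entropy of the
`AE` marginal of the purification of a Bell-diagonal state. -/
theorem HtildeUp_lower_bound
    (p : ℕ) [Fact p.Prime] (P : ZMod p × ZMod p → ℝ) (hP : IsProbDist P)
    (t : ℝ) (ht : 0 < t) :
    Real.logb 2 p
      - ((1 + t) / t) * Real.logb 2 (∑ xz : ZMod p × ZMod p, P xz ^ (1 / (1 + t)))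
    ≤ HtildeUp t
        (Matrix.of fun (ae ae' : ZMod p × (ZMod p × ZMod p)) =>
          ∑ b : ZMod p,
            Matrix.vecMulVec (PsiVec p P) (star (PsiVec p P))
              (ae.1, b, ae.2) (ae'.1, b, ae'.2)) := by
  rw [of_sum_vecMulVec_PsiVec_eq_omegaAE, HtildeUp, le_neg]
  refine le_of_forall_pos_le_add fun ε hε => ?_
  have ha : t / (1 + t) < 1 := (div_lt_one (by linarith)).mpr (by linarith)
  obtain ⟨q, hq, hq1, hqS⟩ :=
    hP.exists_pos_logb_sum_rpow_neg_mul_le (by positivity) ha (δ := t / (1 + t) * ε)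
      (by positivity)
  rw [show 1 - t / (1 + t) = 1 / (1 + t) by field_simp; ring] at hqS
  have hσ : (Matrix.diagonal fun e => (q e : ℂ)).PosDef ∧
      (Matrix.diagonal fun e => (q e : ℂ)).trace = 1 :=
    ⟨Matrix.posDef_diagonal_iff.mpr fun e => by exact_mod_cast hq e,
      by simp [Matrix.trace_diagonal, ← Complex.ofReal_sum, hq1]⟩
  have hε' : (1 + t) / t * (t / (1 + t) * ε) = ε := by field_simp
  calc _ ≤ Dtilde t (omegaAE p P) (1 ⊗ₖ Matrix.diagonal fun e => (q e : ℂ)) :=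
        ciInf_le (bddBelow_range_Dtilde_one_kronecker (omegaAE_posSemidef p P)
          (trace_omegaAE p hP) ht) ⟨_, hσ⟩
    _ = (1 + t) / t * Real.logb 2 (∑ e, q e ^ (-(t / (1 + t))) * P e) - Real.logb 2 p :=
        Dtilde_omegaAE_one_kronecker_diagonal p hP ht hq
    _ ≤ _ := by linarith [mul_le_mul_of_nonneg_left hqS (by positivity : 0 ≤ (1 + t) / t)]

end
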